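/- If G is an irregular graph of order n with at least one pair of vertices whose degrees differ by at least 2, and G has m edges, then μ(G) > 2m/n + 1/(2m+2n). -/

import Mathlib

open Module LinearMap Matrix


section Aux

variable {n : ℕ}

local notation "Eu" => EuclideanSpace ℝ (Fin n)

/-- sup of Rayleigh quotients -/
noncomputable def rayleighSup (T : EuclideanSpace ℝ (Fin n) →ₗ[ℝ] EuclideanSpace ℝ (Fin n)) : ℝ :=
  ⨆ x : { x : EuclideanSpace ℝ (Fin n) // x ≠ 0 },
    (inner ℝ (T x) (x : EuclideanSpace ℝ (Fin n)) : ℝ) / ‖(x : EuclideanSpace ℝ (Fin n))‖ ^ 2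

lemma rayleigh_bdd (T : Eu →ₗ[ℝ] Eu) :
    BddAbove (Set.range fun x : { x : Eu // x ≠ 0 } =>
      (inner ℝ (T x) (x : Eu) : ℝ) / ‖(x : Eu)‖ ^ 2) := by
  refine ⟨‖T.toContinuousLinearMap‖, ?_⟩
  rintro r ⟨⟨x, hx⟩, rfl⟩
  have hne : ‖x‖ ≠ 0 := norm_ne_zero_iff.2 hx
  have hx2 : (0:ℝ) < ‖x‖ ^ 2 := by positivity
  rw [div_le_iff₀ hx2]
  calc (inner ℝ (T x) x : ℝ) ≤ ‖T x‖ * ‖x‖ := real_inner_le_norm _ _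
    _ ≤ ‖T.toContinuousLinearMap‖ * ‖x‖ * ‖x‖ := by
        have := T.toContinuousLinearMap.le_opNorm x
        simp only [LinearMap.coe_toContinuousLinearMap'] at this
        nlinarith [norm_nonneg x]
    _ = ‖T.toContinuousLinearMap‖ * ‖x‖ ^ 2 := by ring

lemma rayleigh_le_sup (T : Eu →ₗ[ℝ] Eu) {x : Eu} (hx : x ≠ 0) :
    (inner ℝ (T x) x : ℝ) / ‖x‖ ^ 2 ≤ rayleighSup T :=
  le_ciSup (rayleigh_bdd T) ⟨x, hx⟩

lemma hasEig_rayleighSup (hn : 0 < n) (T : Eu →ₗ[ℝ] Eu) (hT : T.IsSymmetric) :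
    Module.End.HasEigenvalue T (rayleighSup T) := by
  haveI : Nontrivial Eu := by
    refine ⟨EuclideanSpace.single ⟨0, hn⟩ 1, 0, fun h => ?_⟩
    have := congrArg (fun f => f ⟨0, hn⟩) h
    simp [EuclideanSpace.single] at this
  have h := hT.hasEigenvalue_iSup_of_finiteDimensional
  simpa [rayleighSup] using h

lemma eig_le_rayleighSup (T : Eu →ₗ[ℝ] Eu) {μ : ℝ}
    (h : Module.End.HasEigenvalue T μ) : μ ≤ rayleighSup T := by
  obtain ⟨x, hx⟩ := h.exists_hasEigenvector
  have hx0 : x ≠ 0 := hx.2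
  have hTx : T x = μ • x := hx.apply_eq_smul
  have hne : ‖x‖ ≠ 0 := norm_ne_zero_iff.2 hx0
  have hn2 : (0:ℝ) < ‖x‖ ^ 2 := by positivity
  have : (inner ℝ (T x) x : ℝ) / ‖x‖ ^ 2 = μ := by
    rw [hTx, real_inner_smul_left, real_inner_self_eq_norm_sq]
    field_simp
  linarith [rayleigh_le_sup T hx0]

end Aux



noncomputable def ev (a : Fin n → ℝ) : EuclideanSpace ℝ (Fin n) :=
  (WithLp.equiv 2 (Fin n → ℝ)).symm a

lemma ev_ne_zero {a : Fin n → ℝ} (ha : a ≠ 0) : ev a ≠ 0 := by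
  simpa [ev] using ha

lemma toEuclideanLin_ev (A : Matrix (Fin n) (Fin n) ℝ) (a : Fin n → ℝ) :
    Matrix.toEuclideanLin A (ev a) = ev (A *ᵥ a) :=
  Matrix.toEuclideanLin_apply_piLp_toLp A a

lemma inner_ev (a b : Fin n → ℝ) :
    (inner ℝ (ev a) (ev b) : ℝ) = ∑ i, a i * b i := by
  simp [ev, PiLp.inner_apply, mul_comm]

lemma norm_ev_sq (a : Fin n → ℝ) : ‖ev a‖ ^ 2 = ∑ i, a i * a i := by
  have h := real_inner_self_eq_norm_sq (ev a)
  rw [inner_ev] at h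
  exact h.symm

lemma abs_eig_le (hn : 0 < n) (A : Matrix (Fin n) (Fin n) ℝ) (hA : ∀ i j, 0 ≤ A i j) {μ : ℝ}
    (h : Module.End.HasEigenvalue (Matrix.toEuclideanLin A) μ) :
    |μ| ≤ rayleighSup (Matrix.toEuclideanLin A) := by
  obtain ⟨x, hx⟩ := h.exists_hasEigenvector
  set v : Fin n → ℝ := WithLp.equiv 2 (Fin n → ℝ) x with hv
  have hxv : x = ev v := rfl
  have hv0 : v ≠ 0 := by
    intro hcon
    exact hx.2 (by rw [hxv, hcon]; simp [ev])
  set y : Fin n → ℝ := fun i => |v i| with hy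
  have hy0 : y ≠ 0 := by
    intro hcon
    apply hv0
    funext i
    have := congrFun hcon i
    simp [hy] at this
    simpa using this
  have hnorm : ‖ev y‖ ^ 2 = ‖x‖ ^ 2 := by
    rw [hxv, norm_ev_sq, norm_ev_sq]
    exact Finset.sum_congr rfl fun i _ => abs_mul_abs_self (v i)
  have hpos : (0:ℝ) < ‖x‖ ^ 2 := by
    have : ‖x‖ ≠ 0 := norm_ne_zero_iff.2 hx.2
    positivity
  -- |⟪Tx,x⟫| = |μ| ‖x‖²
  have he : (inner ℝ (Matrix.toEuclideanLin A x) x : ℝ) = μ * ‖x‖ ^ 2 := by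
    rw [hx.apply_eq_smul, real_inner_smul_left, real_inner_self_eq_norm_sq]
  have hinner : (inner ℝ (Matrix.toEuclideanLin A x) x : ℝ) = ∑ i, (A *ᵥ v) i * v i := by
    rw [hxv, toEuclideanLin_ev, inner_ev]
  have hinnery : (inner ℝ (Matrix.toEuclideanLin A (ev y)) (ev y) : ℝ) = ∑ i, (A *ᵥ y) i * y i := by
    rw [toEuclideanLin_ev, inner_ev]
  have hkey : |μ| * ‖x‖ ^ 2 ≤ ∑ i, (A *ᵥ y) i * y i := by
    have h1 : |μ| * ‖x‖ ^ 2 = |∑ i, (A *ᵥ v) i * v i| := by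
      rw [← hinner, he, abs_mul, abs_of_pos hpos]
    rw [h1]
    refine (Finset.abs_sum_le_sum_abs _ _).trans (Finset.sum_le_sum fun i _ => ?_)
    rw [abs_mul]
    have h2 : |(A *ᵥ v) i| ≤ (A *ᵥ y) i := by
      rw [Matrix.mulVec, dotProduct, Matrix.mulVec, dotProduct]
      refine (Finset.abs_sum_le_sum_abs _ _).trans (Finset.sum_le_sum fun j _ => ?_)
      rw [abs_mul, abs_of_nonneg (hA i j)]
    have h3 : (0:ℝ) ≤ (A *ᵥ y) i := (abs_nonneg _).trans h2
    calc |(A *ᵥ v) i| * |v i| ≤ (A *ᵥ y) i * |v i| :=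
          mul_le_mul_of_nonneg_right h2 (abs_nonneg _)
      _ = (A *ᵥ y) i * y i := rfl
  have hray := rayleigh_le_sup (Matrix.toEuclideanLin A) (ev_ne_zero hy0)
  rw [hinnery] at hray
  rw [hnorm] at hray
  rw [div_le_iff₀ hpos] at hray
  calc |μ| = |μ| * ‖x‖ ^ 2 / ‖x‖ ^ 2 := by rw [mul_div_assoc, div_self hpos.ne', mul_one]
    _ ≤ (∑ i, (A *ᵥ y) i * y i) / ‖x‖ ^ 2 := by
        exact div_le_div_of_nonneg_right hkey hpos.le |>.trans_eq rfl
    _ ≤ rayleighSup (Matrix.toEuclideanLin A) := by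
        rw [div_le_iff₀ hpos]; exact hray

lemma norm_apply_sq_le (hn : 0 < n)
    (T : EuclideanSpace ℝ (Fin n) →ₗ[ℝ] EuclideanSpace ℝ (Fin n)) (hT : T.IsSymmetric)
    (habs : ∀ μ : ℝ, Module.End.HasEigenvalue T μ → |μ| ≤ rayleighSup T)
    (x : EuclideanSpace ℝ (Fin n)) :
    ‖T x‖ ^ 2 ≤ (rayleighSup T) ^ 2 * ‖x‖ ^ 2 := by
  set T2 : EuclideanSpace ℝ (Fin n) →ₗ[ℝ] EuclideanSpace ℝ (Fin n) := T ∘ₗ T with hT2def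
  have hT2 : T2.IsSymmetric := by
    intro u w
    calc (inner ℝ (T2 u) w : ℝ) = inner ℝ (T u) (T w) := hT (T u) w
      _ = inner ℝ u (T2 w) := hT u (T w)
  set ν : ℝ := rayleighSup T2 with hν
  have heig : Module.End.HasEigenvalue T2 ν := hasEig_rayleighSup hn T2 hT2
  obtain ⟨z, hz⟩ := heig.exists_hasEigenvector
  have hzpos : (0:ℝ) < ‖z‖ ^ 2 := by
    have : ‖z‖ ≠ 0 := norm_ne_zero_iff.2 hz.2
    positivity
  have hν0 : 0 ≤ ν := by
    have h1 : (inner ℝ (T2 z) z : ℝ) = ν * ‖z‖ ^ 2 := by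
      rw [hz.apply_eq_smul, real_inner_smul_left, real_inner_self_eq_norm_sq]
    have h2 : (inner ℝ (T2 z) z : ℝ) = ‖T z‖ ^ 2 := by
      have := hT (T z) z
      rw [hT2def] at h1
      calc (inner ℝ (T2 z) z : ℝ) = inner ℝ (T z) (T z) := hT (T z) z
        _ = ‖T z‖ ^ 2 := real_inner_self_eq_norm_sq (T z)
    nlinarith [sq_nonneg ‖T z‖]
  set r : ℝ := Real.sqrt ν with hr
  have hr0 : 0 ≤ r := Real.sqrt_nonneg ν
  have hr2 : r ^ 2 = ν := Real.sq_sqrt hν0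
  have hrle : r ≤ rayleighSup T := by
    by_cases hw : T z + r • z = 0
    · have hTz : T z = (-r) • z := by
        rw [neg_smul]
        exact eq_neg_of_add_eq_zero_left hw
      have : Module.End.HasEigenvalue T (-r) :=
        Module.End.hasEigenvalue_of_hasEigenvector
          ⟨Module.End.mem_eigenspace_iff.2 hTz, hz.2⟩
      have := habs _ this
      rwa [abs_neg, abs_of_nonneg hr0] at this
    · have hTw : T (T z + r • z) = r • (T z + r • z) := by
        have hzz : T (T z) = ν • z := hz.apply_eq_smul
        rw [map_add, _root_.map_smul T r z, hzz, ← hr2, smul_add, smul_smul]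
        module
      have heigr : Module.End.HasEigenvalue T r :=
        Module.End.hasEigenvalue_of_hasEigenvector
          ⟨Module.End.mem_eigenspace_iff.2 hTw, hw⟩
      exact eig_le_rayleighSup T heigr
  have hsup0 : 0 ≤ rayleighSup T := hr0.trans hrle
  have hν_le : ν ≤ (rayleighSup T) ^ 2 := by nlinarith
  by_cases hx : x = 0
  · simp [hx]
  · have h1 : ‖T x‖ ^ 2 = (inner ℝ (T2 x) x : ℝ) := by
      calc ‖T x‖ ^ 2 = (inner ℝ (T x) (T x) : ℝ) := (real_inner_self_eq_norm_sq (T x)).symm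
        _ = inner ℝ (T2 x) x := (hT (T x) x).symm
    have h2 := rayleigh_le_sup T2 hx
    have hxpos : (0:ℝ) < ‖x‖ ^ 2 := by
      have : ‖x‖ ≠ 0 := norm_ne_zero_iff.2 hx
      positivity
    rw [div_le_iff₀ hxpos] at h2
    calc ‖T x‖ ^ 2 = (inner ℝ (T2 x) x : ℝ) := h1
      _ ≤ ν * ‖x‖ ^ 2 := h2
      _ ≤ (rayleighSup T) ^ 2 * ‖x‖ ^ 2 := by nlinarith

lemma hasEig_toLin'_iff (A : Matrix (Fin n) (Fin n) ℝ) (μ : ℝ) :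
    Module.End.HasEigenvalue (Matrix.toLin' A) μ ↔
      Module.End.HasEigenvalue (Matrix.toEuclideanLin A) μ := by
  rw [Module.End.hasEigenvalue_iff, Module.End.hasEigenvalue_iff]
  rw [Submodule.ne_bot_iff, Submodule.ne_bot_iff]
  constructor
  · rintro ⟨x, hx, hx0⟩
    rw [Module.End.mem_eigenspace_iff, Matrix.toLin'_apply] at hx
    refine ⟨ev x, Module.End.mem_eigenspace_iff.2 ?_, ev_ne_zero hx0⟩
    rw [toEuclideanLin_ev, hx]
    rfl
  · rintro ⟨x, hx, hx0⟩
    rw [Module.End.mem_eigenspace_iff] at hx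
    set v : Fin n → ℝ := WithLp.equiv 2 (Fin n → ℝ) x with hv
    have hxv : x = ev v := rfl
    refine ⟨v, Module.End.mem_eigenspace_iff.2 ?_, ?_⟩
    · rw [Matrix.toLin'_apply]
      rw [hxv, toEuclideanLin_ev] at hx
      have := congrArg (WithLp.equiv 2 (Fin n → ℝ)) hx
      simpa [ev] using this
    · intro hcon
      exact hx0 (by rw [hxv, hcon]; simp [ev])

lemma sum_deg_sq_ge (G : SimpleGraph (Fin n)) [DecidableRel G.Adj]
    (hgap : ∃ v w : Fin n, G.degree w + 2 ≤ G.degree v) :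
    (∑ i, (G.degree i : ℝ)^2) * n ≥ (2 * G.edgeFinset.card)^2 + 2 * n := by
  obtain ⟨v, w, hvw⟩ := hgap
  have hn : 0 < n := Nat.pos_of_ne_zero (fun h => by subst h; exact absurd v.isLt (by omega))
  have hne : v ≠ w := by
    intro h; rw [h] at hvw; omega
  have hsum : (∑ i, (G.degree i : ℝ)) = 2 * G.edgeFinset.card := by
    exact_mod_cast congrArg (fun k : ℕ => (k:ℝ)) G.sum_degrees_eq_twice_card_edges
  set c : ℝ := (2 * G.edgeFinset.card : ℝ) / n with hc
  have hnR : (0:ℝ) < n := by positivity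
  have hcn : c * n = 2 * G.edgeFinset.card := by
    rw [hc, div_mul_cancel₀ _ hnR.ne']
  have hdev : (∑ i, ((G.degree i : ℝ) - c)^2) ≥ 2 := by
    have hsub : ({v, w} : Finset (Fin n)) ⊆ Finset.univ := Finset.subset_univ _
    have h1 : (∑ i ∈ ({v, w} : Finset (Fin n)), ((G.degree i : ℝ) - c)^2)
        ≤ ∑ i, ((G.degree i : ℝ) - c)^2 :=
      Finset.sum_le_sum_of_subset_of_nonneg hsub (fun i _ _ => sq_nonneg _)
    rw [Finset.sum_pair hne] at h1
    have hvwR : (G.degree w : ℝ) + 2 ≤ (G.degree v : ℝ) := by exact_mod_cast hvw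
    nlinarith [sq_nonneg ((G.degree v : ℝ) + (G.degree w : ℝ) - 2*c),
      sq_nonneg ((G.degree v : ℝ) - (G.degree w : ℝ) - 2)]
  have hexp : (∑ i, ((G.degree i : ℝ) - c)^2)
      = (∑ i, (G.degree i : ℝ)^2) - 2*c*(∑ i, (G.degree i : ℝ)) + n * c^2 := by
    have hring : ∀ x:ℝ, (x - c)^2 = x^2 - 2*c*x + c^2 := fun x => by ring
    simp only [hring]
    rw [Finset.sum_add_distrib, Finset.sum_sub_distrib, ← Finset.mul_sum, Finset.sum_const,
      Finset.card_univ, Fintype.card_fin, nsmul_eq_mul]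
  rw [hexp, hsum] at hdev
  nlinarith [hdev, hcn]

/-- The spectral radius (largest adjacency eigenvalue) of a graph. -/
noncomputable def graphMu {n : ℕ} (G : SimpleGraph (Fin n)) [DecidableRel G.Adj] : ℝ :=
  sSup {x : ℝ | Module.End.HasEigenvalue (Matrix.toLin' (G.adjMatrix ℝ)) x}

set_option maxHeartbeats 2000000 in
theorem degree_gap_two_bound {n : ℕ} (hn : 0 < n) (G : SimpleGraph (Fin n))
    [DecidableRel G.Adj]
    (hgap : ∃ v w : Fin n, G.degree w + 2 ≤ G.degree v) :
    graphMu G > 2 * (G.edgeFinset.card : ℝ) / n +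
      1 / (2 * (G.edgeFinset.card : ℝ) + 2 * n) := by
  classical
  set A : Matrix (Fin n) (Fin n) ℝ := G.adjMatrix ℝ with hA
  set T : EuclideanSpace ℝ (Fin n) →ₗ[ℝ] EuclideanSpace ℝ (Fin n) := Matrix.toEuclideanLin A
    with hTdef
  have hherm : A.IsHermitian := by
    rw [hA, Matrix.IsHermitian]
    ext i j
    simp [Matrix.conjTranspose_apply, SimpleGraph.adj_comm]
  have hT : T.IsSymmetric := Matrix.isHermitian_iff_isSymmetric.1 hherm
  set lam : ℝ := rayleighSup T with hlamdef
  have hlam_mem : Module.End.HasEigenvalue T lam := hasEig_rayleighSup hn T hT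
  have hub : ∀ μ ∈ {x : ℝ | Module.End.HasEigenvalue T x}, μ ≤ lam :=
    fun μ h => eig_le_rayleighSup T h
  have hMu : graphMu G = lam := by
    have hset : {x : ℝ | Module.End.HasEigenvalue (Matrix.toLin' (G.adjMatrix ℝ)) x}
        = {x : ℝ | Module.End.HasEigenvalue T x} := Set.ext fun μ => hasEig_toLin'_iff A μ
    rw [graphMu, hset]
    exact le_antisymm (csSup_le ⟨lam, hlam_mem⟩ hub) (le_csSup ⟨lam, hub⟩ hlam_mem)
  set m : ℕ := G.edgeFinset.card with hm
  set N : ℝ := (n : ℝ) with hN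
  have hNpos : (0:ℝ) < N := by rw [hN]; exact_mod_cast hn
  have hN1 : (1:ℝ) ≤ N := by rw [hN]; exact_mod_cast hn
  have hone : (fun _ : Fin n => (1:ℝ)) ≠ 0 := by
    intro h
    have := congrFun h ⟨0, hn⟩
    norm_num at this
  have hsum : (∑ i, (G.degree i : ℝ)) = 2 * m := by
    exact_mod_cast congrArg (fun k : ℕ => (k:ℝ)) G.sum_degrees_eq_twice_card_edges
  have hAone : A *ᵥ (fun _ => (1:ℝ)) = fun i => (G.degree i : ℝ) := by
    funext i
    rw [hA, SimpleGraph.adjMatrix_mulVec_apply, Finset.sum_const, nsmul_eq_mul, mul_one,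
      SimpleGraph.card_neighborFinset_eq_degree]
  have hinner1 : (inner ℝ (T (ev (fun _ : Fin n => (1:ℝ)))) (ev (fun _ : Fin n => (1:ℝ))) : ℝ)
      = 2 * m := by
    rw [hTdef, toEuclideanLin_ev, hAone, inner_ev]
    simpa using hsum
  have hnorm1 : ‖ev (fun _ : Fin n => (1:ℝ))‖ ^ 2 = N := by
    rw [norm_ev_sq]; simp [hN]
  have hm0 : (0:ℝ) ≤ (m:ℝ) := by positivity
  have hlam_ge : 2 * m / N ≤ lam := by
    have h := rayleigh_le_sup T (ev_ne_zero hone)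
    rw [hinner1, hnorm1] at h
    exact h
  have hlam0 : 0 ≤ lam := le_trans (by positivity) hlam_ge
  have habs : ∀ μ : ℝ, Module.End.HasEigenvalue T μ → |μ| ≤ lam := by
    intro μ h
    refine abs_eig_le hn A (fun i j => ?_) h
    rw [hA, SimpleGraph.adjMatrix_apply]
    split_ifs <;> norm_num
  have hTone := norm_apply_sq_le hn T hT habs (ev (fun _ : Fin n => (1:ℝ)))
  have hTone_eq : ‖T (ev (fun _ : Fin n => (1:ℝ)))‖ ^ 2 = ∑ i, (G.degree i : ℝ)^2 := by
    rw [hTdef, toEuclideanLin_ev, hAone, norm_ev_sq]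
    exact Finset.sum_congr rfl fun i _ => (sq ((G.degree i : ℝ))).symm
  have hHof : (∑ i, (G.degree i : ℝ)^2) ≤ lam ^ 2 * N := by
    rw [← hTone_eq, ← hnorm1]
    exact hTone
  have hcomb := sum_deg_sq_ge G hgap
  rw [hMu]
  have h2 : lam ^ 2 * N * N ≥ (2 * m)^2 + 2 * N := by
    rw [hm, hN] at *
    nlinarith [hcomb, hHof, hNpos]
  have hden : (0:ℝ) < 2 * m + 2 * N := by positivity
  set q : ℝ := N / (2 * m + 2 * N) with hqdef
  have hq : q * (2 * m + 2 * N) = N := div_mul_cancel₀ _ hden.ne'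
  have hq0 : 0 < q := div_pos hNpos hden
  have ht : 2 * (m:ℝ) / N + 1 / (2 * m + 2 * N) = (2 * m + q) / N := by
    have hqN : q / N = 1 / (2 * (m:ℝ) + 2 * N) := by
      rw [hqdef, div_div, mul_comm (2 * (m:ℝ) + 2 * N) N, ← div_div, div_self hNpos.ne']
    rw [add_div, hqN]
  rw [gt_iff_lt, ht, div_lt_iff₀ hNpos]
  by_contra hcon
  push_neg at hcon
  have h3 : (lam * N) ^ 2 ≤ (2 * (m:ℝ) + q) ^ 2 := by
    nlinarith [mul_nonneg hlam0 hNpos.le]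
  have h4 : (lam * N) ^ 2 = lam ^ 2 * N * N := by ring
  have hq12 : q ≤ 1 / 2 := by
    nlinarith [mul_nonneg hm0 hq0.le]
  nlinarith [h3, h4, h2, hq, hq0, hN1, mul_pos hq0 hNpos, mul_nonneg hm0 hq0.le]
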